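/- Let q > 2 and α ∈ (0, α*(q)). Then there exists a point t̂ ∈ (x₀(α), x₁(α)) such that I_q(α) = π·√(-2/f''(t̂)), where f(t) = t² - 1 - α t^q (note f''(t̂) < 0). -/

import Mathlib

open Set Filter MeasureTheory

noncomputable def fQ (q α t : ℝ) : ℝ := t ^ 2 - 1 - α * t ^ q

noncomputable def alphaStar (q : ℝ) : ℝ := 2 / (q - 2) * ((q - 2) / q) ^ (q / 2)

noncomputable def x0 (q α : ℝ) : ℝ := sInf {t : ℝ | 0 < t ∧ fQ q α t = 0}

noncomputable def x1 (q α : ℝ) : ℝ := sSup {t : ℝ | 0 < t ∧ fQ q α t = 0}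

noncomputable def Iq (q α : ℝ) : ℝ := ∫ t in x0 q α..x1 q α, 1 / Real.sqrt (fQ q α t)

noncomputable def fQd1 (q α t : ℝ) : ℝ := 2 * t - α * q * t ^ (q - 1)

noncomputable def fQd2 (q α t : ℝ) : ℝ := 2 - α * q * (q - 1) * t ^ (q - 2)

noncomputable def fQd3 (q α t : ℝ) : ℝ := -(α * q * (q - 1) * (q - 2) * t ^ (q - 3))

noncomputable def psiQ (q α t : ℝ) : ℝ := fQd1 q α t ^ 2 - 2 * fQ q α t * fQd2 q α t

/-!
Let `a < b` be the two positive zeros of `f`. As `f''' < 0`, `f''` is strictly decreasing, and the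
divided-difference mean value theorem writes `f t = -f'' ξ / 2 * (t - a) * (b - t)` with
`ξ ∈ (a, b)`. So `f` lies strictly between `A * w` and `B * w`, where `w t = (t - a) * (b - t)`,
`A = -f'' a / 2` and `B = -f'' b / 2`. Since `∫ₐᵇ 1 / √w = π` (an arcsine), the integral lies
strictly between `π / √B` and `π / √A`, and the intermediate value theorem for `-f'' / 2` produces
`t̂`. The integral converges because both zeros are simple, so that `f ≥ m * w` for some `m > 0`.

The bound `α < α*(q)` says exactly that `f` is positive at its unique critical point
`(2 / (α q)) ^ (1 / (q - 2))`, left of which `f` increases from `f 0 = -1` and right of which it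
decreases to `-∞`; this gives the two simple zeros.
-/

open Real

lemma hasDerivAt_arcsin_affine {a b t : ℝ} (ht : t ∈ Ioo a b) :
    HasDerivAt (fun t => arcsin ((2 * t - a - b) / (b - a))) (1 / √((t - a) * (b - t))) t := by
  have hba : 0 < b - a := by linarith [ht.1, ht.2]
  have hw : 0 < (t - a) * (b - t) := mul_pos (by linarith [ht.1]) (by linarith [ht.2])
  set u := (2 * t - a - b) / (b - a) with hu
  have hu_ne_neg_one : u ≠ -1 := by
    rw [hu, ne_eq, div_eq_iff hba.ne']; nlinarith [ht.1]
  have hu_ne_one : u ≠ 1 := by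
    rw [hu, ne_eq, div_eq_iff hba.ne']; nlinarith [ht.2]
  have hlin : HasDerivAt (fun t : ℝ => (2 * t - a - b) / (b - a)) (2 / (b - a)) t := by
    simpa using ((((hasDerivAt_id t).const_mul 2).sub_const a).sub_const b).div_const (b - a)
  refine ((hasDerivAt_arcsin hu_ne_neg_one hu_ne_one).comp t hlin).congr_deriv ?_
  have h1u : 1 - u ^ 2 = (2 / (b - a)) ^ 2 * ((t - a) * (b - t)) := by
    rw [hu]; field_simp; ring
  rw [h1u, sqrt_mul (sq_nonneg _), sqrt_sq (by positivity)]
  have hsqrt := sqrt_pos.mpr hw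
  field_simp

lemma intervalIntegrable_one_div_sqrt_weight {a b : ℝ} (hab : a < b) :
    IntervalIntegrable (fun t => 1 / √((t - a) * (b - t))) volume a b := by
  rw [intervalIntegrable_iff, uIoc_of_le hab.le]
  exact intervalIntegral.integrableOn_deriv_of_nonneg (by fun_prop)
    (fun x hx => hasDerivAt_arcsin_affine hx) (fun x _ => by positivity)

lemma integral_one_div_sqrt_weight {a b : ℝ} (hab : a < b) :
    ∫ t in a..b, 1 / √((t - a) * (b - t)) = π := by
  have hba : b - a ≠ 0 := by linarith
  rw [intervalIntegral.integral_eq_sub_of_hasDeriv_right_of_le hab.le (by fun_prop)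
    (fun x hx => (hasDerivAt_arcsin_affine hx).hasDerivWithinAt)
    (intervalIntegrable_one_div_sqrt_weight hab)]
  have h1 : (2 * b - a - b) / (b - a) = 1 := by field_simp; ring
  have h2 : (2 * a - a - b) / (b - a) = -1 := by field_simp; ring
  rw [h1, h2, arcsin_one, arcsin_neg_one]
  ring

lemma one_div_sqrt_mul {c x : ℝ} (hc : 0 ≤ c) : 1 / √(c * x) = (√c)⁻¹ * (1 / √x) := by
  rw [sqrt_mul hc, one_div, mul_inv, one_div]

lemma integral_one_div_sqrt_mul_weight {a b c : ℝ} (hab : a < b) (hc : 0 ≤ c) :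
    ∫ t in a..b, 1 / √(c * ((t - a) * (b - t))) = π / √c := by
  simp_rw [one_div_sqrt_mul hc]
  rw [intervalIntegral.integral_const_mul, integral_one_div_sqrt_weight hab, div_eq_inv_mul]

lemma exists_hasDerivAt_eq_zero_of_subset {φ φ' : ℝ → ℝ} {a b u v : ℝ} (hau : a ≤ u) (huv : u < v)
    (hvb : v ≤ b) (hφ : ∀ x ∈ Icc a b, HasDerivAt φ (φ' x) x) (hφuv : φ u = φ v) :
    ∃ ξ ∈ Ioo u v, φ' ξ = 0 :=
  have hsub : Icc u v ⊆ Icc a b := Icc_subset_Icc hau hvb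
  exists_hasDerivAt_eq_zero huv
    (fun x hx => (hφ x (hsub hx)).continuousAt.continuousWithinAt) hφuv
    (fun x hx => hφ x (hsub (Ioo_subset_Icc_self hx)))

lemma exists_eq_neg_half_mul_weight_of_eq_zero {f f' f'' : ℝ → ℝ} {a b t : ℝ}
    (ht : t ∈ Ioo a b) (hf : ∀ x ∈ Icc a b, HasDerivAt f (f' x) x)
    (hf' : ∀ x ∈ Icc a b, HasDerivAt f' (f'' x) x) (ha : f a = 0) (hb : f b = 0) :
    ∃ ξ ∈ Ioo a b, f t = -f'' ξ / 2 * ((t - a) * (b - t)) := by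
  obtain ⟨hat, htb⟩ := ht
  have hw : (t - a) * (b - t) ≠ 0 := mul_ne_zero (by linarith) (by linarith)
  set K := f t / ((t - a) * (b - t)) with hK
  -- `g` vanishes at `a`, `t` and `b`, so `g''` vanishes somewhere in between.
  set g : ℝ → ℝ := fun s => f s - K * ((s - a) * (b - s)) with hg_def
  have hweight : ∀ x, HasDerivAt (fun s => (s - a) * (b - s)) (a + b - 2 * x) x := fun x =>
    (((hasDerivAt_id x).sub_const a).mul ((hasDerivAt_id x).const_sub b)).congr_deriv
      (by simp only [id_eq]; ring)
  have hg : ∀ x ∈ Icc a b, HasDerivAt g (f' x - K * (a + b - 2 * x)) x := fun x hx =>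
    (hf x hx).sub ((hweight x).const_mul K)
  have hg' : ∀ x ∈ Icc a b, HasDerivAt (fun s => f' s - K * (a + b - 2 * s)) (f'' x + 2 * K) x :=
    fun x hx =>
      ((hf' x hx).sub ((((hasDerivAt_id x).const_mul 2).const_sub (a + b)).const_mul K)).congr_deriv
        (by ring)
  have hga : g a = g t := by simp [hg_def, ha, hK, div_mul_cancel₀ _ hw]
  have hgb : g t = g b := by simp [hg_def, hb, hK, div_mul_cancel₀ _ hw]
  obtain ⟨ξ₁, hξ₁, hξ₁0⟩ := exists_hasDerivAt_eq_zero_of_subset le_rfl hat htb.le hg hga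
  obtain ⟨ξ₂, hξ₂, hξ₂0⟩ := exists_hasDerivAt_eq_zero_of_subset hat.le htb le_rfl hg hgb
  obtain ⟨ξ, hξ, hξ0⟩ := exists_hasDerivAt_eq_zero_of_subset hξ₁.1.le
    (hξ₁.2.trans hξ₂.1) hξ₂.2.le hg' (hξ₁0.trans hξ₂0.symm)
  refine ⟨ξ, ⟨hξ₁.1.trans hξ.1, hξ.2.trans hξ₂.2⟩, ?_⟩
  rw [show -f'' ξ / 2 = K by linarith, hK, div_mul_cancel₀ _ hw]

lemma exists_pos_mul_weight_le {f f' : ℝ → ℝ} {a b : ℝ} (hab : a < b)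
    (hf : ∀ x ∈ Icc a b, HasDerivAt f (f' x) x) (ha : f a = 0) (hb : f b = 0)
    (hpos : ∀ t ∈ Ioo a b, 0 < f t) (hda : 0 < f' a) (hdb : f' b < 0) :
    ∃ m > 0, ∀ t ∈ Icc a b, m * ((t - a) * (b - t)) ≤ f t := by
  have haI : a ∈ Icc a b := left_mem_Icc.2 hab.le
  have hbI : b ∈ Icc a b := right_mem_Icc.2 hab.le
  -- Dividing out both simple zeros: `f t = (t - a) * (t - b) * H t` with `H` continuous.
  set G := dslope f a
  set H := dslope G b
  have hfG : ∀ t, (t - a) * G t = f t := sub_smul_dslope_of_zero ha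
  have hGb : G b = 0 := by
    have := hfG b
    rw [hb, mul_eq_zero] at this
    exact this.resolve_left (sub_ne_zero.2 hab.ne')
  have hGH : ∀ t, (t - b) * H t = G t := sub_smul_dslope_of_zero hGb
  have hGb_diff : DifferentiableAt ℝ G b :=
    (differentiableAt_dslope_of_ne hab.ne').2 (hf b hbI).differentiableAt
  have hHa : (a - b) * H a = f' a := by
    rw [hGH, show G a = deriv f a from dslope_same f a, (hf a haI).deriv]
  have hHb : (b - a) * H b = f' b := by
    have hprod : HasDerivAt (fun t => (t - a) * G t) (1 * G b + (b - a) * deriv G b) b :=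
      ((hasDerivAt_id' b).sub_const a).mul hGb_diff.hasDerivAt
    rw [funext hfG] at hprod
    rw [show H b = deriv G b from dslope_same G b, (hf b hbI).unique hprod, hGb]
    ring
  have hHneg : ∀ t ∈ Icc a b, H t < 0 := by
    intro t ht
    rcases eq_or_ne t a with rfl | hta
    · nlinarith
    rcases eq_or_ne t b with rfl | htb
    · nlinarith
    have ht' : t ∈ Ioo a b := ⟨ht.1.lt_of_ne' hta, ht.2.lt_of_ne htb⟩
    have hft : (t - a) * (t - b) * H t = f t := by rw [mul_assoc, hGH, hfG]
    nlinarith [hpos t ht', mul_pos (sub_pos.2 ht'.1) (sub_pos.2 ht'.2)]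
  have hHcont : ContinuousOn H (Icc a b) := by
    intro x hx
    refine ContinuousAt.continuousWithinAt ?_
    rcases eq_or_ne x b with rfl | hxb
    · exact continuousAt_dslope_same.2 hGb_diff
    refine (continuousAt_dslope_of_ne hxb).2 ?_
    rcases eq_or_ne x a with rfl | hxa
    · exact continuousAt_dslope_same.2 (hf x hx).differentiableAt
    · exact (continuousAt_dslope_of_ne hxa).2 (hf x hx).continuousAt
  obtain ⟨t₀, ht₀, hmax⟩ := isCompact_Icc.exists_isMaxOn (nonempty_Icc.2 hab.le) hHcont
  refine ⟨-H t₀, neg_pos.2 (hHneg t₀ ht₀), fun t ht => ?_⟩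
  have hft : f t = -H t * ((t - a) * (b - t)) := by rw [← hfG, ← hGH]; ring
  rw [hft]
  exact mul_le_mul_of_nonneg_right (neg_le_neg (hmax ht))
    (mul_nonneg (sub_nonneg.2 ht.1) (sub_nonneg.2 ht.2))

lemma intervalIntegrable_one_div_sqrt_mul_weight {a b c : ℝ} (hab : a < b) (hc : 0 ≤ c) :
    IntervalIntegrable (fun t => 1 / √(c * ((t - a) * (b - t)))) volume a b := by
  simp_rw [one_div_sqrt_mul hc]
  exact (intervalIntegrable_one_div_sqrt_weight hab).const_mul _

lemma intervalIntegrable_one_div_sqrt_of_mul_weight_le {f : ℝ → ℝ} {a b m : ℝ} (hab : a < b)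
    (hcont : ContinuousOn f (Ioo a b)) (hm : 0 < m)
    (hle : ∀ t ∈ Ioo a b, m * ((t - a) * (b - t)) ≤ f t) :
    IntervalIntegrable (fun t => 1 / √(f t)) volume a b := by
  have hmw : ∀ t ∈ Ioo a b, 0 < m * ((t - a) * (b - t)) := fun t ht =>
    mul_pos hm (mul_pos (sub_pos.2 ht.1) (sub_pos.2 ht.2))
  have hdom := intervalIntegrable_one_div_sqrt_mul_weight hab hm.le
  rw [intervalIntegrable_iff_integrableOn_Ioo_of_le hab.le] at hdom ⊢
  refine hdom.mono' ((continuousOn_const.div hcont.sqrt fun t ht => ?_).aestronglyMeasurable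
    measurableSet_Ioo) ((ae_restrict_iff' measurableSet_Ioo).2 (.of_forall fun t ht => ?_))
  · exact (sqrt_pos.2 ((hmw t ht).trans_le (hle t ht))).ne'
  · rw [norm_of_nonneg (by positivity)]
    exact one_div_le_one_div_of_le (sqrt_pos.2 (hmw t ht)) (sqrt_le_sqrt (hle t ht))

lemma intervalIntegral.integral_lt_integral_of_lt_on_Ioo {g h : ℝ → ℝ} {a b : ℝ} (hab : a < b)
    (hg : IntervalIntegrable g volume a b) (hh : IntervalIntegrable h volume a b)
    (hlt : ∀ t ∈ Ioo a b, g t < h t) : ∫ t in a..b, g t < ∫ t in a..b, h t := by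
  have hdiff := intervalIntegral.intervalIntegral_pos_of_pos_on (hh.sub hg)
    (fun t ht => sub_pos.2 (hlt t ht)) hab
  rwa [intervalIntegral.integral_sub hh hg, sub_pos] at hdiff

lemma integral_one_div_sqrt_lt_of_mul_weight_lt {f : ℝ → ℝ} {a b c : ℝ} (hab : a < b)
    (hfi : IntervalIntegrable (fun t => 1 / √(f t)) volume a b) (hc : 0 < c)
    (hlt : ∀ t ∈ Ioo a b, c * ((t - a) * (b - t)) < f t) :
    ∫ t in a..b, 1 / √(f t) < π / √c := by
  rw [← integral_one_div_sqrt_mul_weight hab hc.le]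
  refine intervalIntegral.integral_lt_integral_of_lt_on_Ioo hab hfi
    (intervalIntegrable_one_div_sqrt_mul_weight hab hc.le) fun t ht => ?_
  have hcw : 0 < c * ((t - a) * (b - t)) := mul_pos hc (mul_pos (sub_pos.2 ht.1) (sub_pos.2 ht.2))
  exact one_div_lt_one_div_of_lt (sqrt_pos.2 hcw) (sqrt_lt_sqrt hcw.le (hlt t ht))

lemma lt_integral_one_div_sqrt_of_lt_mul_weight {f : ℝ → ℝ} {a b c : ℝ} (hab : a < b)
    (hfi : IntervalIntegrable (fun t => 1 / √(f t)) volume a b) (hc : 0 ≤ c)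
    (hpos : ∀ t ∈ Ioo a b, 0 < f t) (hlt : ∀ t ∈ Ioo a b, f t < c * ((t - a) * (b - t))) :
    π / √c < ∫ t in a..b, 1 / √(f t) := by
  rw [← integral_one_div_sqrt_mul_weight hab hc]
  exact intervalIntegral.integral_lt_integral_of_lt_on_Ioo hab
    (intervalIntegrable_one_div_sqrt_mul_weight hab hc) hfi fun t ht =>
      one_div_lt_one_div_of_lt (sqrt_pos.2 (hpos t ht)) (sqrt_lt_sqrt (hpos t ht).le (hlt t ht))

lemma neg_half_mul_weight_lt_of_strictAntiOn {f f' f'' : ℝ → ℝ} {a b t : ℝ}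
    (ht : t ∈ Ioo a b) (hf : ∀ x ∈ Icc a b, HasDerivAt f (f' x) x)
    (hf' : ∀ x ∈ Icc a b, HasDerivAt f' (f'' x) x) (hf''_anti : StrictAntiOn f'' (Icc a b))
    (ha : f a = 0) (hb : f b = 0) :
    -f'' a / 2 * ((t - a) * (b - t)) < f t ∧ f t < -f'' b / 2 * ((t - a) * (b - t)) := by
  obtain ⟨ξ, hξ, hft⟩ := exists_eq_neg_half_mul_weight_of_eq_zero ht hf hf' ha hb
  have hab : a < b := ht.1.trans ht.2
  have hw : 0 < (t - a) * (b - t) := mul_pos (sub_pos.2 ht.1) (sub_pos.2 ht.2)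
  have hξa := hf''_anti (left_mem_Icc.2 hab.le) (Ioo_subset_Icc_self hξ) hξ.1
  have hξb := hf''_anti (Ioo_subset_Icc_self hξ) (right_mem_Icc.2 hab.le) hξ.2
  rw [hft]
  exact ⟨by gcongr, by gcongr⟩

theorem exists_integral_one_div_sqrt_eq_pi_mul_sqrt {f f' f'' : ℝ → ℝ} {a b : ℝ} (hab : a < b)
    (hf : ∀ x ∈ Icc a b, HasDerivAt f (f' x) x) (hf' : ∀ x ∈ Icc a b, HasDerivAt f' (f'' x) x)
    (hf''_cont : ContinuousOn f'' (Icc a b)) (hf''_anti : StrictAntiOn f'' (Icc a b))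
    (ha : f a = 0) (hb : f b = 0) (hpos : ∀ t ∈ Ioo a b, 0 < f t) (hda : 0 < f' a)
    (hdb : f' b < 0) :
    ∃ ξ ∈ Ioo a b, f'' ξ < 0 ∧ ∫ t in a..b, 1 / √(f t) = π * √(-2 / f'' ξ) := by
  have hbounds := fun t (ht : t ∈ Ioo a b) =>
    neg_half_mul_weight_lt_of_strictAntiOn ht hf hf' hf''_anti ha hb
  obtain ⟨m, hm, hmle⟩ := exists_pos_mul_weight_le hab hf ha hb hpos hda hdb
  have hfi : IntervalIntegrable (fun t => 1 / √(f t)) volume a b :=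
    intervalIntegrable_one_div_sqrt_of_mul_weight_le hab
      (fun x hx => (hf x (Ioo_subset_Icc_self hx)).continuousAt.continuousWithinAt) hm
      (fun t ht => hmle t (Ioo_subset_Icc_self ht))
  set I := ∫ t in a..b, 1 / √(f t)
  have hB : 0 < -f'' b / 2 := by
    have hmid : (a + b) / 2 ∈ Ioo a b := ⟨by linarith, by linarith⟩
    exact pos_of_mul_pos_left ((hpos _ hmid).trans (hbounds _ hmid).2)
      (mul_pos (sub_pos.2 hmid.1) (sub_pos.2 hmid.2)).le
  have hIB : π / √(-f'' b / 2) < I :=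
    lt_integral_one_div_sqrt_of_lt_mul_weight hab hfi hB.le hpos fun t ht => (hbounds t ht).2
  have hI : 0 < I := lt_of_le_of_lt (by positivity) hIB
  -- The value of `-f'' / 2` that makes the formula exact is `(π / I) ^ 2`.
  have hcB : (π / I) ^ 2 < -f'' b / 2 := by
    rw [← lt_sqrt (by positivity), div_lt_comm₀ hI (sqrt_pos.2 hB)]
    exact hIB
  have hAc : -f'' a / 2 < (π / I) ^ 2 := by
    rcases le_or_gt (-f'' a / 2) 0 with hA | hA
    · exact hA.trans_lt (by positivity)
    · rw [← sqrt_lt' (by positivity), lt_div_comm₀ (sqrt_pos.2 hA) hI]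
      exact integral_one_div_sqrt_lt_of_mul_weight_lt hab hfi hA fun t ht => (hbounds t ht).1
  obtain ⟨ξ, hξ, hξeq⟩ := intermediate_value_Ioo' hab.le hf''_cont
    (show -2 * (π / I) ^ 2 ∈ Ioo (f'' b) (f'' a) from ⟨by linarith, by linarith⟩)
  have hπ := pi_pos
  refine ⟨ξ, hξ, by rw [hξeq]; linarith [show 0 < (π / I) ^ 2 by positivity], ?_⟩
  rw [hξeq, show -2 / (-2 * (π / I) ^ 2) = (I / π) ^ 2 by field_simp,
    sqrt_sq (by positivity)]
  field_simp

section fQ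

variable {q α t : ℝ}

lemma hasDerivAt_fQ (q α : ℝ) (ht : t ≠ 0) : HasDerivAt (fQ q α) (fQd1 q α t) t :=
  (((hasDerivAt_pow 2 t).sub_const 1).sub
    ((hasDerivAt_rpow_const (p := q) (.inl ht)).const_mul α)).congr_deriv (by simp [fQd1]; ring)

lemma hasDerivAt_fQd1 (q α : ℝ) (ht : t ≠ 0) : HasDerivAt (fQd1 q α) (fQd2 q α t) t :=
  (((hasDerivAt_id t).const_mul 2).sub
    ((hasDerivAt_rpow_const (p := q - 1) (.inl ht)).const_mul (α * q))).congr_deriv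
    (by simp only [fQd2, sub_sub, one_add_one_eq_two]; ring)

lemma continuous_fQ (hq : 0 ≤ q) : Continuous (fQ q α) := by
  unfold fQ; have := continuous_rpow_const hq; fun_prop

lemma continuous_fQd2 (hq : 2 ≤ q) : Continuous (fQd2 q α) := by
  unfold fQd2; have := continuous_rpow_const (sub_nonneg.2 hq); fun_prop

lemma strictAntiOn_fQd2 (hq : 2 < q) (hα : 0 < α) : StrictAntiOn (fQd2 q α) (Ici 0) :=
  fun x hx y _ hxy => by
    have hk : 0 < α * q * (q - 1) := mul_pos (mul_pos hα (by linarith)) (by linarith)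
    unfold fQd2
    gcongr

lemma fQ_eq (ht : 0 < t) : fQ q α t = t ^ 2 * (1 - α * t ^ (q - 2)) - 1 := by
  rw [fQ, rpow_sub ht, rpow_two]; field_simp; ring

lemma fQd1_eq (ht : 0 < t) : fQd1 q α t = t * (2 - α * q * t ^ (q - 2)) := by
  rw [fQd1, show q - 1 = q - 2 + 1 by ring, rpow_add_one ht.ne']; ring

lemma alphaStar_eq (hq : 2 < q) : alphaStar q = 2 / q * ((q - 2) / q) ^ ((q - 2) / 2) := by
  have hr : 0 < (q - 2) / q := div_pos (by linarith) (by linarith)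
  rw [alphaStar, show q / 2 = (q - 2) / 2 + 1 by ring, rpow_add hr, rpow_one]
  field_simp [show q - 2 ≠ 0 by linarith]

noncomputable def critPt (q α : ℝ) : ℝ := (2 / (α * q)) ^ (q - 2)⁻¹

lemma critPt_pos (hq : 0 < q) (hα : 0 < α) : 0 < critPt q α := by unfold critPt; positivity

lemma critPt_rpow (hq : 2 < q) (hα : 0 < α) : critPt q α ^ (q - 2) = 2 / (α * q) :=
  rpow_inv_rpow (div_pos two_pos (mul_pos hα (by linarith))).le (by linarith)

lemma fQd1_pos_of_lt_critPt (hq : 2 < q) (hα : 0 < α) (ht : 0 < t) (htc : t < critPt q α) :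
    0 < fQd1 q α t := by
  have hpow := rpow_lt_rpow ht.le htc (sub_pos.2 hq)
  rw [critPt_rpow hq hα, lt_div_iff₀' (mul_pos hα (by linarith))] at hpow
  rw [fQd1_eq ht]
  exact mul_pos ht (by linarith)

lemma fQd1_neg_of_critPt_lt (hq : 2 < q) (hα : 0 < α) (htc : critPt q α < t) :
    fQd1 q α t < 0 := by
  have hc : 0 < critPt q α := critPt_pos (by linarith) hα
  have hpow := rpow_lt_rpow hc.le htc (sub_pos.2 hq)
  rw [critPt_rpow hq hα, div_lt_iff₀' (mul_pos hα (by linarith))] at hpow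
  rw [fQd1_eq (hc.trans htc)]
  exact mul_neg_of_pos_of_neg (hc.trans htc) (by linarith)

lemma strictMonoOn_fQ (hq : 2 < q) (hα : 0 < α) :
    StrictMonoOn (fQ q α) (Icc 0 (critPt q α)) :=
  strictMonoOn_of_deriv_pos (convex_Icc _ _) (continuous_fQ (by linarith)).continuousOn
    fun x hx => by
      rw [interior_Icc] at hx
      rw [(hasDerivAt_fQ q α hx.1.ne').deriv]
      exact fQd1_pos_of_lt_critPt hq hα hx.1 hx.2

lemma strictAntiOn_fQ (hq : 2 < q) (hα : 0 < α) : StrictAntiOn (fQ q α) (Ici (critPt q α)) :=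
  strictAntiOn_of_deriv_neg (convex_Ici _) (continuous_fQ (by linarith)).continuousOn
    fun x hx => by
      rw [interior_Ici] at hx
      rw [(hasDerivAt_fQ q α ((critPt_pos (by linarith) hα).trans hx).ne').deriv]
      exact fQd1_neg_of_critPt_lt hq hα hx

lemma fQ_critPt_pos (hq : 2 < q) (hα : α ∈ Ioo 0 (alphaStar q)) : 0 < fQ q α (critPt q α) := by
  have hq0 : 0 < q := by linarith
  have hq2 : 0 < q - 2 := by linarith
  have hα0 := hα.1
  have hr : 0 < (q - 2) / q := div_pos hq2 hq0
  have hX : 1 < 2 / (α * q) * ((q - 2) / q) ^ ((q - 2) / 2) := by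
    have hlt := hα.2
    rw [alphaStar_eq hq] at hlt
    rw [div_mul_eq_mul_div, one_lt_div (mul_pos hα0 hq0)]
    calc α * q < 2 / q * ((q - 2) / q) ^ ((q - 2) / 2) * q := by gcongr
      _ = 2 * ((q - 2) / q) ^ ((q - 2) / 2) := by field_simp
  have hcr : 1 < critPt q α ^ 2 * ((q - 2) / q) := by
    have hpow : critPt q α ^ 2 * ((q - 2) / q) =
        (2 / (α * q) * ((q - 2) / q) ^ ((q - 2) / 2)) ^ (2 / (q - 2)) := by
      rw [mul_rpow (by positivity) (by positivity), ← rpow_mul hr.le,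
        show (q - 2) / 2 * (2 / (q - 2)) = 1 by field_simp, rpow_one, critPt,
        ← rpow_mul_natCast (by positivity)]
      congr 2
      push_cast
      ring
    rw [hpow]
    exact one_lt_rpow hX (div_pos two_pos hq2)
  rw [fQ_eq (critPt_pos hq0 hα0), critPt_rpow hq hα0,
    show 1 - α * (2 / (α * q)) = (q - 2) / q by field_simp]
  linarith

lemma exists_fQ_eq_zero (hq : 2 < q) (hα : α ∈ Ioo 0 (alphaStar q)) :
    ∃ a ∈ Ioo 0 (critPt q α), ∃ b ∈ Ioi (critPt q α), fQ q α a = 0 ∧ fQ q α b = 0 := by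
  have hq0 : 0 < q := by linarith
  have hcont : Continuous (fQ q α) := continuous_fQ hq0.le
  have hfc := fQ_critPt_pos hq hα
  have hc := critPt_pos hq0 hα.1
  have hf0 : fQ q α 0 = -1 := by simp [fQ, zero_rpow hq0.ne']
  obtain ⟨a, ha, hfa⟩ := intermediate_value_Ioo hc.le hcont.continuousOn
    (show (0 : ℝ) ∈ Ioo (fQ q α 0) (fQ q α (critPt q α)) by rw [hf0]; exact ⟨by norm_num, hfc⟩)
  set T := α⁻¹ ^ (q - 2)⁻¹
  have hT : 0 < T := rpow_pos_of_pos (inv_pos.2 hα.1) _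
  have hTq : T ^ (q - 2) = α⁻¹ := rpow_inv_rpow (inv_nonneg.2 hα.1.le) (by linarith)
  have hcT : critPt q α < T := by
    rw [← rpow_lt_rpow_iff hc.le hT.le (sub_pos.2 hq), critPt_rpow hq hα.1, hTq, div_lt_iff₀
      (mul_pos hα.1 hq0), inv_mul_cancel_left₀ hα.1.ne']
    exact hq
  have hfT : fQ q α T = -1 := by rw [fQ_eq hT, hTq, mul_inv_cancel₀ hα.1.ne']; ring
  obtain ⟨b, hb, hfb⟩ := intermediate_value_Ioo' hcT.le hcont.continuousOn
    (show (0 : ℝ) ∈ Ioo (fQ q α T) (fQ q α (critPt q α)) by rw [hfT]; exact ⟨by norm_num, hfc⟩)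
  exact ⟨a, ha, b, hb.1, hfa, hfb⟩

lemma setOf_fQ_eq_zero {a b : ℝ} (hq : 2 < q) (hα : 0 < α) (ha : a ∈ Ioo 0 (critPt q α))
    (hb : critPt q α < b) (hfa : fQ q α a = 0) (hfb : fQ q α b = 0) :
    {t | 0 < t ∧ fQ q α t = 0} = {a, b} := by
  ext t
  simp only [mem_insert_iff, mem_singleton_iff]
  constructor
  · rintro ⟨ht, hft⟩
    rcases le_or_gt t (critPt q α) with htc | htc
    · exact .inl <|
        (strictMonoOn_fQ hq hα).injOn ⟨ht.le, htc⟩ ⟨ha.1.le, ha.2.le⟩ (hft.trans hfa.symm)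
    · exact .inr <| (strictAntiOn_fQ hq hα).injOn htc.le hb.le (hft.trans hfb.symm)
  · rintro (rfl | rfl)
    · exact ⟨ha.1, hfa⟩
    · exact ⟨(critPt_pos (by linarith) hα).trans hb, hfb⟩

lemma fQ_pos_of_mem_Ioo {a b : ℝ} (hq : 2 < q) (hα : 0 < α) (ha : a ∈ Ioo 0 (critPt q α))
    (hb : critPt q α < b) (hfa : fQ q α a = 0) (hfb : fQ q α b = 0) (ht : t ∈ Ioo a b) :
    0 < fQ q α t := by
  rcases le_or_gt t (critPt q α) with htc | htc
  · exact hfa ▸ strictMonoOn_fQ hq hα ⟨ha.1.le, ha.2.le⟩ ⟨ha.1.le.trans ht.1.le, htc⟩ ht.1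
  · exact hfb ▸ strictAntiOn_fQ hq hα (mem_Ici.2 htc.le) (mem_Ici.2 hb.le) ht.2

end fQ

/-- there is t̂ ∈ (x₀, x₁) with f''(t̂) < 0 and I_q(α) = π·√(-2/f''(t̂)). -/
theorem stmt_16 (q α : ℝ) (hq : 2 < q) (hα : α ∈ Ioo (0 : ℝ) (alphaStar q)) :
    ∃ that ∈ Ioo (x0 q α) (x1 q α),
      fQd2 q α that < 0 ∧ Iq q α = Real.pi * Real.sqrt (-2 / fQd2 q α that) := by
  obtain ⟨a, ha, b, hb, hfa, hfb⟩ := exists_fQ_eq_zero hq hα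
  have hab : a < b := ha.2.trans hb
  have hroots := setOf_fQ_eq_zero hq hα.1 ha hb hfa hfb
  have hx0 : x0 q α = a := by rw [x0, hroots, csInf_pair, inf_of_le_left hab.le]
  have hx1 : x1 q α = b := by rw [x1, hroots, csSup_pair, sup_of_le_right hab.le]
  have hne : ∀ x ∈ Icc a b, x ≠ 0 := fun x hx => (ha.1.trans_le hx.1).ne'
  rw [Iq, hx0, hx1]
  exact exists_integral_one_div_sqrt_eq_pi_mul_sqrt hab
    (fun x hx => hasDerivAt_fQ q α (hne x hx)) (fun x hx => hasDerivAt_fQd1 q α (hne x hx))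
    (continuous_fQd2 hq.le).continuousOn
    ((strictAntiOn_fQd2 hq hα.1).mono fun x hx => (ha.1.trans_le hx.1).le) hfa hfb
    (fun t ht => fQ_pos_of_mem_Ioo hq hα.1 ha hb hfa hfb ht)
    (fQd1_pos_of_lt_critPt hq hα.1 ha.1 ha.2) (fQd1_neg_of_critPt_lt hq hα.1 hb)
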